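/- Let p be a prime. Then S^{(p)}(n1,n2,m1,m2;p,p^2) = r_p(m1) · S(n2, m2 p; p^2), where S(a,b;c) is the classical Kloosterman sum and r_p the Ramanujan sum mod p. -/

import Mathlib

open Finset

/-- `e(x) = exp(2πix)`. -/
noncomputable def eChar (x : ℝ) : ℂ := Complex.exp (2 * Real.pi * Complex.I * x)

/-- Ramanujan sum `r_q(n) = Σ_{a mod q, (a,q)=1} e(an/q)`. -/
noncomputable def ramanujanSum (q : ℕ) (n : ℤ) : ℂ :=
  ∑ a ∈ Finset.range q, if Nat.gcd a q = 1 then eChar ((a : ℝ) * (n : ℝ) / q) else 0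

/-- The GL(3) Kloosterman sum `S^{(N)}(n1,n2,m1,m2;D1,D2)`.  The summand is independent of
the choice of `(Y_j, Z_j)` with `Y_j B_j + Z_j C_j ≡ 1 mod D_j`; since there are exactly
`D_j` such pairs modulo `D_j`, we sum over all of them and divide by `D1 * D2`. -/
noncomputable def Kloosterman3 (N : ℕ) (n1 n2 m1 m2 : ℤ) (D1 D2 : ℕ) : ℂ :=
  (1 / ((D1 : ℂ) * (D2 : ℂ))) *
  ∑ B1 ∈ range D1, ∑ C1 ∈ range D1, ∑ Y1 ∈ range D1, ∑ Z1 ∈ range D1,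
  ∑ B2 ∈ range D2, ∑ C2 ∈ range D2, ∑ Y2 ∈ range D2, ∑ Z2 ∈ range D2,
    if ((D1 : ℤ) * C2 + (B1 : ℤ) * B2 + (D2 : ℤ) * C1) % ((D1 : ℤ) * D2) = 0 ∧
       Nat.gcd (Nat.gcd B1 C1) D1 = 1 ∧ Nat.gcd (Nat.gcd B2 C2) D2 = 1 ∧
       (N : ℤ) ∣ (B1 : ℤ) ∧
       ((Y1 : ℤ) * B1 + (Z1 : ℤ) * C1) % (D1 : ℤ) = 1 % (D1 : ℤ) ∧
       ((Y2 : ℤ) * B2 + (Z2 : ℤ) * C2) % (D2 : ℤ) = 1 % (D2 : ℤ) then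
      eChar (((n1 * B1 + m1 * ((Y1 : ℤ) * D2 - (Z1 : ℤ) * B2) : ℤ) : ℝ) / D1 +
             ((n2 * B2 + m2 * ((Y2 : ℤ) * D1 - (Z2 : ℤ) * B1) : ℤ) : ℝ) / D2)
    else 0

/-- The classical Kloosterman sum `S(a,b;c) = Σ_{x x̄ ≡ 1 mod c} e((ax + b x̄)/c)`. -/
noncomputable def Kloosterman2 (a b : ℤ) (c : ℕ) : ℂ :=
  ∑ x ∈ range c, ∑ y ∈ range c,
    if ((x : ℤ) * y) % (c : ℤ) = 1 % (c : ℤ) then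
      eChar (((a * x + b * y : ℤ) : ℝ) / c) else 0

/-! Since `B₁ < p` and `p ∣ B₁`, only `B₁ = 0` contributes. The congruence
`p C₂ + p² C₁ ≡ 0 mod p³` then says `C₂ ≡ -p C₁ mod p²`, so `C₂` is nilpotent modulo `p²` and
`Y₂ B₂ + Z₂ C₂ ≡ 1` forces `B₂` to be a unit with `Y₂ ≡ B̄₂ mod p` (bars denote inverses);
likewise `Z₁ ≡ C̄₁ mod p`.
The free variables `Y₁, Z₂` give exactly the normalising factor `p · p²`, which leaves
`∑_{C₁, B₂ units} e(-m₁ C̄₁ B₂ / p) e((n₂ B₂ + m₂ p B̄₂) / p²)`, and the substitution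
`C₁ ↦ -C̄₁ B₂` turns the inner sum into `r_p(m₁)`. -/

lemma eChar_add (x y : ℝ) : eChar (x + y) = eChar x * eChar y := by
  simp only [eChar, Complex.ofReal_add, mul_add, Complex.exp_add]

lemma eChar_intCast_div (a : ℤ) (c : ℕ) [NeZero c] :
    eChar ((a : ℝ) / c) = ZMod.stdAddChar (a : ZMod c) := by
  rw [ZMod.stdAddChar_coe, eChar]
  push_cast
  ring_nf

lemma Int.emod_eq_one_emod_iff (a : ℤ) (n : ℕ) : a % n = (1 : ℤ) % n ↔ (a : ZMod n) = 1 := by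
  rw [← ZMod.intCast_eq_intCast_iff', Int.cast_one]

namespace ZMod

variable {M : Type*} [AddCommMonoid M] {n : ℕ}

lemma sum_range_natCast [NeZero n] (g : ZMod n → M) :
    ∑ x ∈ range n, g x = ∑ x : ZMod n, g x :=
  Finset.sum_nbij' (fun x : ℕ => (x : ZMod n)) ZMod.val (by simp) (by simp [ZMod.val_lt])
    (fun x hx => ZMod.val_cast_of_lt (mem_range.1 hx)) (fun x _ => ZMod.natCast_zmod_val x)
    (fun _ _ => rfl)

lemma sum_range_ite_natCast_eq [NeZero n] (a : ZMod n) (f : ℕ → M) :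
    ∑ x ∈ range n, (if (x : ZMod n) = a then f x else 0) = f a.val := by
  rw [Finset.sum_eq_single_of_mem a.val (mem_range.2 a.val_lt), ZMod.natCast_zmod_val, if_pos rfl]
  intro x hx hne
  rw [if_neg]
  rintro rfl
  exact hne (ZMod.val_cast_of_lt (mem_range.1 hx)).symm

lemma sum_range_sum_range_ite_natCast_eq [NeZero n] (g : ℕ → ZMod n) (c : M) :
    ∑ y ∈ range n, ∑ z ∈ range n, (if (y : ZMod n) = g z then c else 0) = n • c := by
  rw [Finset.sum_comm]
  simp only [sum_range_ite_natCast_eq (f := fun _ => c), sum_const, card_range]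

lemma sum_range_ite_isUnit [NeZero n] (f : ZMod n → M) :
    ∑ x ∈ range n, (if IsUnit (x : ZMod n) then f x else 0) = ∑ u : (ZMod n)ˣ, f u := by
  rw [sum_range_natCast (fun x => if IsUnit x then f x else 0), ← Finset.sum_filter]
  exact (Finset.sum_nbij' Units.val (fun x => if h : IsUnit x then h.unit else 1) (by simp)
    (by simp) (by simp) (fun _ _ => by simp_all) (by simp)).symm

lemma isUnit_natCast_of_dvd {m : ℕ} (h : m ∣ n) {x : ℕ} (hx : IsUnit (x : ZMod n)) :
    IsUnit (x : ZMod m) := by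
  simpa using hx.map (ZMod.castHom h (ZMod m))

lemma mul_eq_one_iff_isUnit_and_eq_inv {a b : ZMod n} : a * b = 1 ↔ IsUnit b ∧ a = b⁻¹ := by
  constructor
  · intro h
    exact ⟨IsUnit.of_mul_eq_one_right a h,
      (ZMod.inv_eq_of_mul_eq_one n b a (by rw [mul_comm, h])).symm⟩
  · rintro ⟨hb, rfl⟩
    exact ZMod.inv_mul_of_unit b hb

lemma mul_add_mul_eq_one_iff {y b z c : ZMod n} (hc : IsNilpotent c) :
    y * b + z * c = 1 ↔ IsUnit b ∧ y = b⁻¹ * (1 - z * c) := by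
  constructor
  · intro h
    have hyb : y * b = 1 - z * c := by linear_combination h
    have hu : IsUnit (y * b) := hyb ▸ ((Commute.all z c).isNilpotent_mul_left hc).isUnit_one_sub
    have hb : IsUnit b := isUnit_of_mul_isUnit_right hu
    refine ⟨hb, ?_⟩
    rw [← hyb, mul_comm y, ← mul_assoc, ZMod.inv_mul_of_unit b hb, one_mul]
  · rintro ⟨hb, rfl⟩
    rw [mul_right_comm, ZMod.inv_mul_of_unit b hb, one_mul, sub_add_cancel]

lemma natCast_self_sq (p : ℕ) : (p : ZMod (p ^ 2)) ^ 2 = 0 := by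
  rw [← Nat.cast_pow, ZMod.natCast_self]

lemma isNilpotent_natCast_mul (p : ℕ) (x : ZMod (p ^ 2)) :
    IsNilpotent ((p : ZMod (p ^ 2)) * x) :=
  ⟨2, by rw [mul_pow, natCast_self_sq, zero_mul]⟩

end ZMod

lemma ramanujanSum_eq_sum_units (q : ℕ) [NeZero q] (m : ℤ) :
    ramanujanSum q m = ∑ u : (ZMod q)ˣ, ZMod.stdAddChar ((u : ZMod q) * (m : ZMod q)) := by
  rw [ramanujanSum,
    ← ZMod.sum_range_ite_isUnit (fun x => ZMod.stdAddChar (x * (m : ZMod q)))]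
  refine Finset.sum_congr rfl fun a _ => ?_
  rw [show (a : ℝ) * m = ((a * m : ℤ) : ℝ) by push_cast; ring, eChar_intCast_div]
  simp only [← Nat.coprime_iff_gcd_eq_one, ← ZMod.isUnit_iff_coprime, Int.cast_mul,
    Int.cast_natCast]

lemma sum_range_stdAddChar_neg_mul_inv_mul_eq_ramanujanSum (q : ℕ) [NeZero q] (m : ℤ)
    {b : ZMod q} (hb : IsUnit b) :
    ∑ x ∈ range q, (if IsUnit (x : ZMod q) then
      ZMod.stdAddChar (-(m : ZMod q) * (x : ZMod q)⁻¹ * b) else 0) = ramanujanSum q m := by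
  rw [ZMod.sum_range_ite_isUnit (fun x => ZMod.stdAddChar (-(m : ZMod q) * x⁻¹ * b)),
    ramanujanSum_eq_sum_units]
  refine Fintype.sum_equiv ((Equiv.inv _).trans ((Equiv.mulRight hb.unit).trans (Equiv.neg _)))
    _ _ fun u => ?_
  simp only [Equiv.trans_apply, Equiv.inv_apply, Equiv.coe_mulRight, Equiv.neg_apply,
    Units.val_neg, Units.val_mul, IsUnit.unit_spec, ZMod.inv_coe_unit]
  ring_nf

lemma kloosterman2_eq_sum_isUnit (a b : ℤ) (c : ℕ) [NeZero c] :
    Kloosterman2 a b c = ∑ x ∈ range c, (if IsUnit (x : ZMod c) then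
      ZMod.stdAddChar ((a : ZMod c) * (x : ZMod c) + (b : ZMod c) * (x : ZMod c)⁻¹) else 0) := by
  refine Finset.sum_congr rfl fun x _ => ?_
  simp only [Int.emod_eq_one_emod_iff, eChar_intCast_div]
  simp only [Int.cast_mul, Int.cast_add, Int.cast_natCast, mul_comm (x : ZMod c),
    ZMod.mul_eq_one_iff_isUnit_and_eq_inv, ite_and, sum_ite_irrel, sum_const_zero,
    ZMod.sum_range_ite_natCast_eq, ZMod.natCast_val, ZMod.cast_id', id]

noncomputable def kloosterman3Term (N : ℕ) (n1 n2 m1 m2 : ℤ)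
    (D1 D2 B1 C1 Y1 Z1 B2 C2 Y2 Z2 : ℕ) : ℂ :=
  if ((D1 : ℤ) * C2 + (B1 : ℤ) * B2 + (D2 : ℤ) * C1) % ((D1 : ℤ) * D2) = 0 ∧
     Nat.gcd (Nat.gcd B1 C1) D1 = 1 ∧ Nat.gcd (Nat.gcd B2 C2) D2 = 1 ∧
     (N : ℤ) ∣ (B1 : ℤ) ∧
     ((Y1 : ℤ) * B1 + (Z1 : ℤ) * C1) % (D1 : ℤ) = 1 % (D1 : ℤ) ∧
     ((Y2 : ℤ) * B2 + (Z2 : ℤ) * C2) % (D2 : ℤ) = 1 % (D2 : ℤ) then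
    eChar (((n1 * B1 + m1 * ((Y1 : ℤ) * D2 - (Z1 : ℤ) * B2) : ℤ) : ℝ) / D1 +
           ((n2 * B2 + m2 * ((Y2 : ℤ) * D1 - (Z2 : ℤ) * B1) : ℤ) : ℝ) / D2)
  else 0

lemma kloosterman3_eq_sum_kloosterman3Term (N : ℕ) (n1 n2 m1 m2 : ℤ) (D1 D2 : ℕ) :
    Kloosterman3 N n1 n2 m1 m2 D1 D2 = 1 / ((D1 : ℂ) * (D2 : ℂ)) *
      ∑ B1 ∈ range D1, ∑ C1 ∈ range D1, ∑ Y1 ∈ range D1, ∑ Z1 ∈ range D1,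
      ∑ B2 ∈ range D2, ∑ C2 ∈ range D2, ∑ Y2 ∈ range D2, ∑ Z2 ∈ range D2,
        kloosterman3Term N n1 n2 m1 m2 D1 D2 B1 C1 Y1 Z1 B2 C2 Y2 Z2 :=
  rfl

lemma kloosterman3Term_of_not_dvd {N : ℕ} (n1 n2 m1 m2 : ℤ) (D1 D2 : ℕ)
    {B1 : ℕ} (hB1 : ¬ (N : ℤ) ∣ B1) (C1 Y1 Z1 B2 C2 Y2 Z2 : ℕ) :
    kloosterman3Term N n1 n2 m1 m2 D1 D2 B1 C1 Y1 Z1 B2 C2 Y2 Z2 = 0 := by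
  simp only [kloosterman3Term, hB1, false_and, and_false, if_false]

lemma intCast_mul_add_sq_mul_emod_eq_zero_iff {p : ℕ} (hp : p ≠ 0) (C C' : ℕ) :
    ((p : ℤ) * C + ((p ^ 2 : ℕ) : ℤ) * C') % ((p : ℤ) * ((p ^ 2 : ℕ) : ℤ)) = 0 ↔
      (C : ZMod (p ^ 2)) = -(p * C') := by
  rw [← Int.dvd_iff_emod_eq_zero, show (p : ℤ) * C + ((p ^ 2 : ℕ) : ℤ) * C' = p * (C + p * C') by
    push_cast; ring, mul_dvd_mul_iff_left (by exact_mod_cast hp),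
    ← ZMod.intCast_zmod_eq_zero_iff_dvd, eq_neg_iff_add_eq_zero]
  push_cast
  rfl

lemma kloosterman3Term_level_p_p_psq {p : ℕ} [hp : Fact p.Prime] (n1 n2 m1 m2 : ℤ)
    (C1 Y1 Z1 B2 C2 Y2 Z2 : ℕ) :
    kloosterman3Term p n1 n2 m1 m2 p (p ^ 2) 0 C1 Y1 Z1 B2 C2 Y2 Z2 =
      if IsUnit (C1 : ZMod p) ∧ (Z1 : ZMod p) = (C1 : ZMod p)⁻¹ ∧
          IsUnit (B2 : ZMod (p ^ 2)) ∧ (C2 : ZMod (p ^ 2)) = -(p * C1) ∧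
          (Y2 : ZMod (p ^ 2)) = (B2 : ZMod (p ^ 2))⁻¹ * (1 - Z2 * C2) then
        ZMod.stdAddChar (-(m1 : ZMod p) * (C1 : ZMod p)⁻¹ * (B2 : ZMod p)) *
          ZMod.stdAddChar ((n2 : ZMod (p ^ 2)) * (B2 : ZMod (p ^ 2)) +
            ((m2 * p : ℤ) : ZMod (p ^ 2)) * (B2 : ZMod (p ^ 2))⁻¹)
      else 0 := by
  refine ite_congr (propext ?_) (fun h => ?_) (fun _ => rfl)
  · simp only [Nat.cast_zero, zero_mul, add_zero, mul_zero, zero_add, Nat.gcd_zero_left,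
      dvd_zero, true_and, intCast_mul_add_sq_mul_emod_eq_zero_iff hp.out.ne_zero,
      Int.emod_eq_one_emod_iff, Int.cast_add, Int.cast_mul, Int.cast_natCast,
      ZMod.mul_eq_one_iff_isUnit_and_eq_inv]
    have hnil : (C2 : ZMod (p ^ 2)) = -(p * C1) → IsNilpotent (C2 : ZMod (p ^ 2)) :=
      fun hC2 => hC2 ▸ (ZMod.isNilpotent_natCast_mul p C1).neg
    constructor
    · rintro ⟨hC2, -, -, ⟨hC1, hZ1⟩, hY2⟩
      obtain ⟨hB2, hY2⟩ := (ZMod.mul_add_mul_eq_one_iff (hnil hC2)).1 hY2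
      exact ⟨hC1, hZ1, hB2, hC2, hY2⟩
    · rintro ⟨hC1, hZ1, hB2, hC2, hY2⟩
      exact ⟨hC2, (ZMod.isUnit_iff_coprime C1 p).1 hC1,
        Nat.Coprime.coprime_dvd_left (Nat.gcd_dvd_left _ _) ((ZMod.isUnit_iff_coprime B2 _).1 hB2),
        ⟨hC1, hZ1⟩, (ZMod.mul_add_mul_eq_one_iff (hnil hC2)).2 ⟨hB2, hY2⟩⟩
  · obtain ⟨-, hZ1, -, hC2, hY2⟩ := h
    rw [eChar_add, eChar_intCast_div, eChar_intCast_div]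
    congr 2
    · push_cast
      rw [hZ1, ZMod.natCast_self]
      ring
    · push_cast
      rw [hY2, hC2]
      linear_combination (m2 * (B2 : ZMod (p ^ 2))⁻¹ * Z2 * C1) * ZMod.natCast_self_sq p

lemma kloosterman3_level_p_p_psq_eq_sum {p : ℕ} [hp : Fact p.Prime] (n1 n2 m1 m2 : ℤ) :
    Kloosterman3 p n1 n2 m1 m2 p (p ^ 2) =
      ∑ B2 ∈ range (p ^ 2), if IsUnit (B2 : ZMod (p ^ 2)) then
        (∑ C1 ∈ range p, if IsUnit (C1 : ZMod p) then
          ZMod.stdAddChar (-(m1 : ZMod p) * (C1 : ZMod p)⁻¹ * (B2 : ZMod p)) else 0) *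
        ZMod.stdAddChar ((n2 : ZMod (p ^ 2)) * (B2 : ZMod (p ^ 2)) +
          ((m2 * p : ℤ) : ZMod (p ^ 2)) * (B2 : ZMod (p ^ 2))⁻¹)
      else 0 := by
  rw [kloosterman3_eq_sum_kloosterman3Term,
    Finset.sum_eq_single_of_mem 0 (mem_range.2 hp.out.pos)]
  · simp only [kloosterman3Term_level_p_p_psq, ite_and, sum_ite_irrel, sum_const_zero,
      ZMod.sum_range_ite_natCast_eq, ZMod.sum_range_sum_range_ite_natCast_eq, sum_const,
      card_range, nsmul_eq_mul]
    have hp0 : (p : ℂ) ≠ 0 := Nat.cast_ne_zero.2 hp.out.ne_zero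
    have hcancel (z : ℂ) : 1 / (p * ((p ^ 2 : ℕ) : ℂ)) * (p * ((p ^ 2 : ℕ) * z)) = z := by
      push_cast
      field_simp
    simp only [Finset.mul_sum, Finset.sum_mul, hcancel, ← Finset.sum_filter]
    exact Finset.sum_comm
  · intro B1 hB1 hB1_ne
    have hndvd : ¬ (p : ℤ) ∣ B1 := fun h =>
      hB1_ne (Nat.eq_zero_of_dvd_of_lt (Int.natCast_dvd_natCast.1 h) (mem_range.1 hB1))
    simp only [kloosterman3Term_of_not_dvd _ _ _ _ _ _ hndvd, sum_const_zero]

/-- for a prime `p`,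
`S^{(p)}(n1,n2,m1,m2;p,p²) = r_p(m1) · S(n2, m2 p; p²)`. -/
theorem kloosterman3_level_p_p_psq (p : ℕ) (hp : p.Prime) (n1 n2 m1 m2 : ℤ) :
    Kloosterman3 p n1 n2 m1 m2 p (p ^ 2) =
      ramanujanSum p m1 * Kloosterman2 n2 (m2 * p) (p ^ 2) := by
  have := Fact.mk hp
  rw [kloosterman3_level_p_p_psq_eq_sum, kloosterman2_eq_sum_isUnit, Finset.mul_sum]
  refine Finset.sum_congr rfl fun B2 _ => ?_
  split_ifs with hB2
  · rw [sum_range_stdAddChar_neg_mul_inv_mul_eq_ramanujanSum p m1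
      (ZMod.isUnit_natCast_of_dvd (dvd_pow_self p two_ne_zero) hB2)]
  · rw [mul_zero]
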